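/- arXiv:1206.6787 — 3 statements merged into one kernel-verified Lean document; each statement's English description precedes it below -/
import Mathlib

section
/- For every k ∈ ℝ, (1/(2π)) ∫_{-∞}^∞ e^{-k(iu - 1/2)} / (u² + 1/4) du = e^{min(k,0)}. -/
/-!
Splitting at `0`, `∫ e^{ist} e^{-a|t|} dt = 1/(a + is) + 1/(a - is) = 2a/(s² + a²)` for `a > 0`.
So the Fourier transform of `e^{-a|t|}` is integrable, and Fourier inversion gives
`∫ e^{iuk}/(u² + a²) du = (π/a) e^{-a|k|}`. The theorem is the case `a = 1/2`, once the real factor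
`e^{k/2}` is pulled out of the integral: `k/2 - |k|/2 = min k 0`.
-/

open MeasureTheory Complex Set
open scoped Real FourierTransform

section ExpNegAbs

variable {a : ℝ}

lemma exp_mul_I_mul_exp_neg_abs_of_nonpos (s : ℝ) {t : ℝ} (ht : t ≤ 0) :
    cexp (s * t * I) * (Real.exp (-a * |t|) : ℂ) = cexp ((a + s * I) * t) := by
  rw [abs_of_nonpos ht, ofReal_exp, ← Complex.exp_add]
  push_cast
  ring_nf

lemma exp_mul_I_mul_exp_neg_abs_of_nonneg (s : ℝ) {t : ℝ} (ht : 0 ≤ t) :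
    cexp (s * t * I) * (Real.exp (-a * |t|) : ℂ) = cexp ((-a + s * I) * t) := by
  rw [abs_of_nonneg ht, ofReal_exp, ← Complex.exp_add]
  push_cast
  ring_nf

lemma integrableOn_Iic_exp_mul_I_mul_exp_neg_abs (ha : 0 < a) (s : ℝ) :
    IntegrableOn (fun t : ℝ => cexp (s * t * I) * (Real.exp (-a * |t|) : ℂ)) (Iic 0) :=
  (integrableOn_exp_mul_complex_Iic (by simpa) 0).congr_fun
    (fun _ ht => (exp_mul_I_mul_exp_neg_abs_of_nonpos s ht).symm) measurableSet_Iic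

lemma integrableOn_Ioi_exp_mul_I_mul_exp_neg_abs (ha : 0 < a) (s : ℝ) :
    IntegrableOn (fun t : ℝ => cexp (s * t * I) * (Real.exp (-a * |t|) : ℂ)) (Ioi 0) :=
  (integrableOn_exp_mul_complex_Ioi (by simpa) 0).congr_fun
    (fun _ ht => (exp_mul_I_mul_exp_neg_abs_of_nonneg s ht.le).symm) measurableSet_Ioi

lemma integral_exp_mul_I_mul_exp_neg_abs (ha : 0 < a) (s : ℝ) :
    ∫ t : ℝ, cexp (s * t * I) * (Real.exp (-a * |t|) : ℂ) = 2 * a / (s ^ 2 + a ^ 2) := by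
  rw [← intervalIntegral.integral_Iic_add_Ioi (integrableOn_Iic_exp_mul_I_mul_exp_neg_abs ha s)
      (integrableOn_Ioi_exp_mul_I_mul_exp_neg_abs ha s),
    setIntegral_congr_fun measurableSet_Iic fun _ ht => exp_mul_I_mul_exp_neg_abs_of_nonpos s ht,
    setIntegral_congr_fun measurableSet_Ioi fun _ ht =>
      exp_mul_I_mul_exp_neg_abs_of_nonneg s ht.le,
    integral_exp_mul_complex_Iic (by simpa) 0, integral_exp_mul_complex_Ioi (by simpa) 0]
  simp only [ofReal_zero, mul_zero, Complex.exp_zero]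
  have h₁ : (a : ℂ) + s * I ≠ 0 := fun h => by simpa [ha.ne'] using congrArg re h
  have h₂ : -(a : ℂ) + s * I ≠ 0 := fun h => by simpa [ha.ne'] using congrArg re h
  have h₃ : (s : ℂ) ^ 2 + a ^ 2 ≠ 0 := by exact_mod_cast (by positivity : s ^ 2 + a ^ 2 ≠ 0)
  field_simp
  ring_nf
  rw [I_sq]
  ring

lemma integrable_exp_mul_I_mul_exp_neg_abs (ha : 0 < a) (s : ℝ) :
    Integrable (fun t : ℝ => cexp (s * t * I) * (Real.exp (-a * |t|) : ℂ)) := by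
  rw [← integrableOn_univ, ← Iic_union_Ioi (a := 0)]
  exact (integrableOn_Iic_exp_mul_I_mul_exp_neg_abs ha s).union
    (integrableOn_Ioi_exp_mul_I_mul_exp_neg_abs ha s)

lemma fourier_exp_neg_abs (ha : 0 < a) (w : ℝ) :
    𝓕 (fun t : ℝ => (Real.exp (-a * |t|) : ℂ)) w = 2 * a / ((2 * π * w) ^ 2 + a ^ 2) := by
  rw [Real.fourier_real_eq_integral_exp_smul]
  have h := integral_exp_mul_I_mul_exp_neg_abs ha (-2 * π * w)
  rw [show ((-2 * π * w : ℝ) : ℂ) ^ 2 = (2 * π * w) ^ 2 by push_cast; ring] at h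
  rw [← h]
  congr 1 with t
  rw [smul_eq_mul]
  push_cast
  ring_nf

lemma integrable_fourier_exp_neg_abs (ha : 0 < a) :
    Integrable (𝓕 fun t : ℝ => (Real.exp (-a * |t|) : ℂ)) := by
  have h : Integrable fun w : ℝ => 2 / a * (1 + (2 * π / a * w) ^ 2)⁻¹ :=
    (integrable_inv_one_add_sq.comp_mul_left' (by positivity)).const_mul _
  refine (h.ofReal (𝕜 := ℂ)).congr (ae_of_all _ fun w => ?_)
  have : 2 / a * (1 + (2 * π / a * w) ^ 2)⁻¹ = 2 * a / ((2 * π * w) ^ 2 + a ^ 2) := by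
    field_simp
    ring
  dsimp only
  rw [fourier_exp_neg_abs ha, this]
  push_cast
  rfl

lemma integral_exp_mul_I_div_sq_add_sq (ha : 0 < a) (k : ℝ) :
    ∫ u : ℝ, cexp (u * k * I) / (u ^ 2 + a ^ 2) = π / a * Real.exp (-a * |k|) := by
  set g : ℝ → ℂ := fun t => Real.exp (-a * |t|)
  have hg : Continuous g := by fun_prop
  have hinv := congrFun (hg.fourierInv_fourier_eq
    ((integrable_exp_mul_I_mul_exp_neg_abs ha 0).congr (ae_of_all _ fun t => by simp [g]))
    (integrable_fourier_exp_neg_abs ha)) k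
  set h : ℝ → ℂ := fun u => cexp (u * k * I) / (u ^ 2 + a ^ 2)
  have hintegrand : ∀ v : ℝ, cexp (↑(-2 * π * v * -k) * I) • 𝓕 g v = 2 * a * h (2 * π * v) := by
    intro v
    rw [fourier_exp_neg_abs ha, smul_eq_mul]
    simp only [h]
    push_cast
    ring_nf
  rw [Real.fourierInv_eq_fourier_neg, Real.fourier_real_eq_integral_exp_smul] at hinv
  simp_rw [hintegrand] at hinv
  rw [integral_const_mul, Measure.integral_comp_mul_left h, abs_of_pos (by positivity),
    Complex.real_smul] at hinv
  have ha' : (a : ℂ) ≠ 0 := by exact_mod_cast ha.ne'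
  have hπ : (π : ℂ) ≠ 0 := by exact_mod_cast Real.pi_ne_zero
  rw [show ((Real.exp (-a * |k|) : ℝ) : ℂ) = g k from rfl, ← hinv]
  push_cast
  field_simp

end ExpNegAbs

lemma min_zero_eq_sub_abs_div_two (k : ℝ) : min k 0 = (k - |k|) / 2 := by
  rcases le_total k 0 with hk | hk
  · rw [min_eq_left hk, abs_of_nonpos hk]; ring
  · rw [min_eq_right hk, abs_of_nonneg hk]; ring

/-- The `v = 0` limit of the Lewis-Lipton Black-Scholes integral:
`(1/(2π)) ∫ e^{-k(iu - 1/2)}/(u² + 1/4) du = e^{min(k,0)}`. -/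
theorem lewis_lipton_v_zero (k : ℝ) :
    (1 / (2 * Real.pi) : ℂ) *
        ∫ u : ℝ, Complex.exp (-(k : ℂ) * (Complex.I * (u : ℂ) - 1 / 2)) /
          ((u : ℂ) ^ 2 + 1 / 4) =
      ((Real.exp (min k 0) : ℝ) : ℂ) := by
  have hintegrand : ∀ u : ℝ, cexp (-(k : ℂ) * (I * u - 1 / 2)) / ((u : ℂ) ^ 2 + 1 / 4) =
      cexp (k / 2) * (cexp (u * (-k : ℝ) * I) / (u ^ 2 + (1 / 2 : ℝ) ^ 2)) := by
    intro u
    rw [mul_div_assoc', ← Complex.exp_add]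
    push_cast
    ring_nf
  simp_rw [hintegrand]
  rw [integral_const_mul, integral_exp_mul_I_div_sq_add_sq (by norm_num), abs_neg,
    min_zero_eq_sub_abs_div_two, show (k - |k|) / 2 = k / 2 + -(1 / 2) * |k| by ring,
    Real.exp_add]
  have hπ : (π : ℂ) ≠ 0 := by exact_mod_cast Real.pi_ne_zero
  push_cast
  field_simp
end

section
/- Let ι > 0, κ ≥ 0, ι₁ = √κ · ι, ι₂ = √(κ+1) · ι, and let k < ι₂ - ι₁, v = 2ι²/(ι₂ - ι₁ - k). Then ∫_k^{ι₂-ι₁} (e^x - e^k) · e^{ι₁ + κ(x - (ι₂-ι₁))} · (1/(2√π)) ι · exp(-ι²/(4(ι₂-ι₁-x))) / (ι₂-ι₁-x)^{3/2} dx = e^{ι₂} D(v, 2ι₂) - e^{k+ι₁} D(v, 2ι₁), where D(v,k) = e^{-k/2} Φ(-(-k+v/2)/√v) + e^{k/2} Φ((-k-v/2)/√v). -/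
open MeasureTheory

/-- Standard normal density. -/
noncomputable def gaussPDF (x : ℝ) : ℝ := Real.exp (-x ^ 2 / 2) / Real.sqrt (2 * Real.pi)

/-- Standard normal CDF. -/
noncomputable def gaussCDF (x : ℝ) : ℝ := ∫ t in Set.Iic x, gaussPDF t

/-- Symmetrized Black-Scholes function
`D(v,k) = e^{-k/2}Φ(-d₊) + e^{k/2}Φ(d₋)`, `d± = (-k ± v/2)/√v`. -/
noncomputable def Dsym (v k : ℝ) : ℝ :=
  Real.exp (-k / 2) * gaussCDF (-((-k + v / 2) / Real.sqrt v)) +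
    Real.exp (k / 2) * gaussCDF ((-k - v / 2) / Real.sqrt v)

/-!
After the substitution `u = ι₂ - ι₁ - x`, the kernel `ι / (2√π) · e^{-ι²/4u} / u^{3/2}` is the
density of the first time a standard Brownian motion reaches the level `a = ι/√2`, and the
exponential factors `e^{ι₂ - (κ+1)u}` and `e^{ι₁ - κu}` tilt it into the first-passage densities
of Brownian motions with drifts `√(2(κ+1))` and `√(2κ)`. The integral is therefore a difference of
two first-passage distribution functions at time `T = ι₂ - ι₁ - k`, and the classical formula
`Φ(μ√T - a/√T) + e^{2aμ} Φ(-μ√T - a/√T)` for these is `e^{aμ} D(4a²/T, 2aμ)`.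
-/

open Filter Set Topology Real ProbabilityTheory

theorem hasDerivAt_integral_Iic {E : Type*} [NormedAddCommGroup E] [NormedSpace ℝ E]
    [CompleteSpace E] {f : ℝ → E} (hf : Integrable f) {x : ℝ} (hfx : ContinuousAt f x) :
    HasDerivAt (fun y => ∫ t in Iic y, f t) (f x) x := by
  have hsplit :
      (fun y => ∫ t in Iic y, f t) = fun y => (∫ t in Iic 0, f t) + ∫ t in 0..y, f t := by
    funext y
    rw [← intervalIntegral.integral_Iic_sub_Iic hf.integrableOn hf.integrableOn, add_sub_cancel]
  rw [hsplit]
  exact (intervalIntegral.integral_hasDerivAt_right hf.intervalIntegrable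
    hf.aestronglyMeasurable.stronglyMeasurableAtFilter hfx).const_add _

theorem intervalIntegrable_deriv_of_nonneg_of_tendsto {f f' : ℝ → ℝ} {a b fa : ℝ} (hab : a ≤ b)
    (hderiv : ∀ x ∈ Ioc a b, HasDerivAt f (f' x) x) (hpos : ∀ x ∈ Ioo a b, 0 ≤ f' x)
    (hfa : Tendsto f (𝓝[>] a) (𝓝 fa)) : IntervalIntegrable f' volume a b := by
  have hcont : ContinuousOn (Function.update f a fa) (Icc a b) := by
    rw [continuousOn_update_iff, Icc_sdiff_left]
    exact ⟨fun x hx => (hderiv x hx).continuousAt.continuousWithinAt,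
      fun _ => hfa.mono_left (nhdsWithin_mono _ Ioc_subset_Ioi_self)⟩
  refine intervalIntegral.intervalIntegrable_deriv_of_nonneg (g := Function.update f a fa)
    ?_ ?_ ?_
  · rwa [uIcc_of_le hab]
  · rw [min_eq_left hab, max_eq_right hab]
    intro x hx
    refine (hderiv x (Ioo_subset_Ioc_self hx)).congr_of_eventuallyEq ?_
    filter_upwards [lt_mem_nhds hx.1] with y hy using Function.update_of_ne hy.ne' _ _
  · rwa [min_eq_left hab, max_eq_right hab]

theorem integral_Ioo_eq_integral_comp_sub_left {E : Type*} [NormedAddCommGroup E]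
    [NormedSpace ℝ E] (f : ℝ → E) {k c : ℝ} (hk : k ≤ c) :
    ∫ x in Ioo k c, f x = ∫ u in 0..c - k, f (c - u) := by
  rw [← integral_Ioc_eq_integral_Ioo, ← intervalIntegral.integral_of_le hk,
    intervalIntegral.integral_comp_sub_left, sub_sub_cancel, sub_zero]

lemma gaussPDF_eq_gaussianPDFReal : gaussPDF = gaussianPDFReal 0 1 := by
  ext x
  simp [gaussPDF, gaussianPDFReal, div_eq_inv_mul]

lemma continuous_gaussPDF : Continuous gaussPDF := by
  unfold gaussPDF; fun_prop

lemma hasDerivAt_gaussCDF (x : ℝ) : HasDerivAt gaussCDF (gaussPDF x) x :=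
  hasDerivAt_integral_Iic (gaussPDF_eq_gaussianPDFReal ▸ integrable_gaussianPDFReal 0 1)
    continuous_gaussPDF.continuousAt

lemma tendsto_gaussCDF_atBot : Tendsto gaussCDF atBot (𝓝 0) :=
  tendsto_integral_Iic_zero tendsto_id

/-- Density of the first time a Brownian motion with drift `μ` reaches the level `a`. -/
noncomputable def firstPassageDensity (a μ t : ℝ) : ℝ :=
  a / √(2 * π) * exp (-(a - μ * t) ^ 2 / (2 * t)) / t ^ ((3 : ℝ) / 2)

noncomputable def firstPassageCDF (a μ t : ℝ) : ℝ :=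
  gaussCDF (μ * √t - a / √t) + exp (2 * a * μ) * gaussCDF (-(μ * √t) - a / √t)

lemma firstPassageDensity_nonneg {a t : ℝ} (μ : ℝ) (ha : 0 ≤ a) (ht : 0 ≤ t) :
    0 ≤ firstPassageDensity a μ t := by
  unfold firstPassageDensity; positivity

lemma firstPassageDensity_eq_exp_mul (a μ t : ℝ) :
    firstPassageDensity a μ t = exp (a * μ - μ ^ 2 * t / 2) * firstPassageDensity a 0 t := by
  rcases eq_or_ne t 0 with rfl | ht
  · simp [firstPassageDensity]
  unfold firstPassageDensity
  rw [mul_div_assoc', mul_left_comm, ← exp_add]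
  congr 3
  field_simp
  ring

lemma firstPassageDensity_div_sqrt_two_zero (ι t : ℝ) :
    firstPassageDensity (ι / √2) 0 t =
      ι / (2 * √π) * exp (-ι ^ 2 / (4 * t)) / t ^ ((3 : ℝ) / 2) := by
  have h2 : √2 ^ 2 = 2 := sq_sqrt zero_le_two
  rw [firstPassageDensity, zero_mul, sub_zero, div_pow, h2, sqrt_mul zero_le_two, div_div,
    ← mul_assoc, ← sq, h2]
  ring_nf

lemma exp_mul_gaussPDF_neg_sub (a μ : ℝ) {s : ℝ} (hs : s ≠ 0) :
    exp (2 * a * μ) * gaussPDF (-(μ * s) - a / s) = gaussPDF (μ * s - a / s) := by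
  unfold gaussPDF
  rw [mul_div_assoc', ← exp_add]
  congr 2
  field_simp
  ring

lemma gaussPDF_mul_eq_firstPassageDensity (a μ : ℝ) {t : ℝ} (ht : 0 < t) :
    gaussPDF (μ * √t - a / √t) * (a / (t * √t)) = firstPassageDensity a μ t := by
  have h32 : t ^ ((3 : ℝ) / 2) = t * √t := by
    rw [show (3 : ℝ) / 2 = 1 + 1 / 2 by norm_num, rpow_add ht, rpow_one, sqrt_eq_rpow]
  obtain ⟨s, hs, rfl⟩ : ∃ s, 0 < s ∧ s ^ 2 = t := ⟨√t, sqrt_pos.2 ht, sq_sqrt ht.le⟩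
  unfold gaussPDF firstPassageDensity
  rw [h32, sqrt_sq hs.le]
  have hexp : -(μ * s - a / s) ^ 2 / 2 = -(a - μ * s ^ 2) ^ 2 / (2 * s ^ 2) := by
    field_simp
    ring
  rw [hexp]
  ring

theorem hasDerivAt_firstPassageCDF (a μ : ℝ) {t : ℝ} (ht : 0 < t) :
    HasDerivAt (firstPassageCDF a μ) (firstPassageDensity a μ t) t := by
  have hs : √t ≠ 0 := (sqrt_pos.2 ht).ne'
  have hsqrt := hasDerivAt_sqrt ht.ne'
  have hdiv := (hasDerivAt_const t a).div hsqrt hs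
  have h₁ := (hasDerivAt_gaussCDF _).comp t ((hsqrt.const_mul μ).sub hdiv)
  have h₂ := ((hasDerivAt_gaussCDF _).comp t ((hsqrt.const_mul μ).neg.sub hdiv)).const_mul
    (exp (2 * a * μ))
  refine (h₁.add h₂).congr_deriv ?_
  dsimp only [Pi.sub_apply, Pi.neg_apply, Pi.div_apply]
  rw [← mul_assoc, exp_mul_gaussPDF_neg_sub a μ hs, ← gaussPDF_mul_eq_firstPassageDensity a μ ht,
    ← mul_add]
  congr 1
  rw [sq_sqrt ht.le]
  field_simp
  ring

theorem tendsto_firstPassageCDF_nhdsGT_zero (μ : ℝ) {a : ℝ} (ha : 0 < a) :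
    Tendsto (firstPassageCDF a μ) (𝓝[>] 0) (𝓝 0) := by
  have hsqrt : Tendsto (fun t => √t) (𝓝[>] 0) (𝓝[>] 0) := by
    refine tendsto_nhdsWithin_iff.2 ⟨?_, ?_⟩
    · exact (continuous_sqrt.tendsto' 0 0 sqrt_zero).mono_left nhdsWithin_le_nhds
    · filter_upwards [self_mem_nhdsWithin] with t ht using sqrt_pos.2 ht
  have hdrift : Tendsto (fun t => μ * √t) (𝓝[>] 0) (𝓝 0) := by
    simpa using (tendsto_nhdsWithin_iff.1 hsqrt).1.const_mul μ
  have hlevel : Tendsto (fun t => -(a / √t)) (𝓝[>] 0) atBot := by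
    simp_rw [div_eq_mul_inv]
    exact tendsto_neg_atTop_atBot.comp (hsqrt.inv_tendsto_nhdsGT_zero.const_mul_atTop ha)
  have h₁ := tendsto_gaussCDF_atBot.comp (hdrift.add_atBot hlevel)
  have h₂ := (tendsto_gaussCDF_atBot.comp (hdrift.neg.add_atBot hlevel)).const_mul
    (exp (2 * a * μ))
  have h := h₁.add h₂
  rw [mul_zero, add_zero] at h
  exact h.congr fun t => by simp only [firstPassageCDF, Function.comp_apply, sub_eq_add_neg]

theorem intervalIntegrable_firstPassageDensity (μ : ℝ) {a T : ℝ} (ha : 0 < a) (hT : 0 ≤ T) :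
    IntervalIntegrable (firstPassageDensity a μ) volume 0 T :=
  intervalIntegrable_deriv_of_nonneg_of_tendsto hT
    (fun _ ht => hasDerivAt_firstPassageCDF a μ ht.1)
    (fun _ ht => firstPassageDensity_nonneg μ ha.le ht.1.le)
    (tendsto_firstPassageCDF_nhdsGT_zero μ ha)

theorem integral_firstPassageDensity (μ : ℝ) {a T : ℝ} (ha : 0 < a) (hT : 0 < T) :
    ∫ t in 0..T, firstPassageDensity a μ t = firstPassageCDF a μ T := by
  rw [intervalIntegral.integral_eq_sub_of_hasDerivAt_of_tendsto hT
    (fun _ ht => hasDerivAt_firstPassageCDF a μ ht.1)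
    (intervalIntegrable_firstPassageDensity μ ha hT.le)
    (tendsto_firstPassageCDF_nhdsGT_zero μ ha)
    ((hasDerivAt_firstPassageCDF a μ hT).continuousAt.tendsto.mono_left nhdsWithin_le_nhds),
    sub_zero]

theorem firstPassageCDF_eq_exp_mul_Dsym (μ : ℝ) {a T : ℝ} (ha : 0 < a) (hT : 0 < T) :
    firstPassageCDF a μ T = exp (a * μ) * Dsym (4 * a ^ 2 / T) (2 * (a * μ)) := by
  obtain ⟨s, hs, rfl⟩ : ∃ s, 0 < s ∧ s ^ 2 = T := ⟨√T, sqrt_pos.2 hT, sq_sqrt hT.le⟩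
  have hv : √(4 * a ^ 2 / s ^ 2) = 2 * a / s := by
    rw [show 4 * a ^ 2 / s ^ 2 = (2 * a / s) ^ 2 by ring, sqrt_sq (by positivity)]
  have hd₁ : -((-(2 * (a * μ)) + 4 * a ^ 2 / s ^ 2 / 2) / (2 * a / s)) = μ * s - a / s := by
    field_simp
    ring
  have hd₂ : (-(2 * (a * μ)) - 4 * a ^ 2 / s ^ 2 / 2) / (2 * a / s) = -(μ * s) - a / s := by
    field_simp
    ring
  have he₁ : exp (a * μ) * exp (-(2 * (a * μ)) / 2) = 1 := by
    rw [← exp_add, ← exp_zero]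
    ring_nf
  have he₂ : exp (a * μ) * exp (2 * (a * μ) / 2) = exp (2 * a * μ) := by
    rw [← exp_add]
    ring_nf
  rw [firstPassageCDF, Dsym, hv, hd₁, hd₂, sqrt_sq hs.le, mul_add, ← mul_assoc (exp (a * μ)),
    ← mul_assoc (exp (a * μ)), he₁, he₂, one_mul]

theorem integral_call_eq_Dsym {a μ₁ μ₂ ι₁ ι₂ k v : ℝ} (ha : 0 < a) (hμ : μ₂ ^ 2 = μ₁ ^ 2 + 2)
    (h₁ : a * μ₁ = ι₁) (h₂ : a * μ₂ = ι₂) (hk : k < ι₂ - ι₁)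
    (hv : v = 4 * a ^ 2 / (ι₂ - ι₁ - k)) :
    ∫ x in Ioo k (ι₂ - ι₁), (exp x - exp k) * exp (ι₁ + μ₁ ^ 2 / 2 * (x - (ι₂ - ι₁))) *
        firstPassageDensity a 0 (ι₂ - ι₁ - x) =
      exp ι₂ * Dsym v (2 * ι₂) - exp (k + ι₁) * Dsym v (2 * ι₁) := by
  have hT : 0 < ι₂ - ι₁ - k := sub_pos.2 hk
  have hintegrand (u : ℝ) :
      (exp (ι₂ - ι₁ - u) - exp k) * exp (ι₁ + μ₁ ^ 2 / 2 * (ι₂ - ι₁ - u - (ι₂ - ι₁))) *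
          firstPassageDensity a 0 (ι₂ - ι₁ - (ι₂ - ι₁ - u)) =
        firstPassageDensity a μ₂ u - exp k * firstPassageDensity a μ₁ u := by
    have e₁ :
        exp (ι₁ + μ₁ ^ 2 / 2 * (ι₂ - ι₁ - u - (ι₂ - ι₁))) = exp (a * μ₁ - μ₁ ^ 2 * u / 2) := by
      congr 1
      linear_combination -h₁
    have e₂ : exp (ι₂ - ι₁ - u) * exp (a * μ₁ - μ₁ ^ 2 * u / 2) =
        exp (a * μ₂ - μ₂ ^ 2 * u / 2) := by
      rw [← exp_add]
      congr 1
      linear_combination (u / 2) * hμ - h₂ + h₁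
    rw [sub_sub_cancel, firstPassageDensity_eq_exp_mul a μ₂, firstPassageDensity_eq_exp_mul a μ₁,
      e₁, ← e₂]
    ring
  rw [integral_Ioo_eq_integral_comp_sub_left _ hk.le, intervalIntegral.integral_congr
    fun u _ => hintegrand u, intervalIntegral.integral_sub
    (intervalIntegrable_firstPassageDensity μ₂ ha hT.le)
    ((intervalIntegrable_firstPassageDensity μ₁ ha hT.le).const_mul _),
    intervalIntegral.integral_const_mul, integral_firstPassageDensity μ₂ ha hT,
    integral_firstPassageDensity μ₁ ha hT, firstPassageCDF_eq_exp_mul_Dsym μ₂ ha hT,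
    firstPassageCDF_eq_exp_mul_Dsym μ₁ ha hT, h₁, h₂, ← hv, exp_add]
  ring

/-- Closed-form call price for the exponential tempered Lévy-Gauss process
(`α = 1/2`, only negative jumps, tempering `κ`). -/
theorem tempered_levy_gauss_call (ι κ k ι₁ ι₂ v : ℝ)
    (hι : 0 < ι) (hκ : 0 ≤ κ)
    (h1 : ι₁ = Real.sqrt κ * ι) (h2 : ι₂ = Real.sqrt (κ + 1) * ι)
    (hk : k < ι₂ - ι₁) (hv : v = 2 * ι ^ 2 / (ι₂ - ι₁ - k)) :
    ∫ x in Set.Ioo k (ι₂ - ι₁),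
        (Real.exp x - Real.exp k) * Real.exp (ι₁ + κ * (x - (ι₂ - ι₁))) *
          (ι / (2 * Real.sqrt Real.pi)) * Real.exp (-ι ^ 2 / (4 * (ι₂ - ι₁ - x))) /
            (ι₂ - ι₁ - x) ^ ((3 : ℝ) / 2) =
      Real.exp ι₂ * Dsym v (2 * ι₂) - Real.exp (k + ι₁) * Dsym v (2 * ι₁) := by
  have hlevel {c : ℝ} (hc : 0 ≤ c) : ι / √2 * √(2 * c) = √c * ι := by
    rw [sqrt_mul zero_le_two]
    field_simp
  have hμ : √(2 * (κ + 1)) ^ 2 = √(2 * κ) ^ 2 + 2 := by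
    rw [sq_sqrt (by positivity), sq_sqrt (by positivity)]
    ring
  have hv' : v = 4 * (ι / √2) ^ 2 / (ι₂ - ι₁ - k) := by
    rw [hv, div_pow, sq_sqrt zero_le_two]
    ring
  rw [← integral_call_eq_Dsym (by positivity) hμ ((hlevel hκ).trans h1.symm)
    ((hlevel (by positivity)).trans h2.symm) hk hv']
  refine setIntegral_congr_fun measurableSet_Ioo fun x _ => ?_
  rw [sq_sqrt (by positivity), mul_div_cancel_left₀ κ two_ne_zero,
    firstPassageDensity_div_sqrt_two_zero]
  ring
end

section
/- Let α ∈ (1,2), α' = 1/α, p < 0, q ∈ ℝ, r = √(p²+q²), χ = arctan(-q/p). Then (1/π) Re ∫_0^∞ (1 - e^{(p+iq)v^α}) v^{-2} dv = (Γ(1-α')/π) r^{α'} cos(α'χ), and this quantity is positive. -/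
open MeasureTheory Complex Set

lemma intA {t c : ℝ} (ht : -1 < t) (hc : 0 < c) :
    IntegrableOn (fun w : ℝ ↦ w ^ t * Real.exp (-(c * w))) (Ioi 0) := by
  have h := Real.GammaIntegral_convergent (show 0 < t + 1 by linarith)
  have h2 : IntegrableOn (fun x : ℝ ↦ Real.exp (-(c * x)) * (c * x) ^ (t + 1 - 1)) (Ioi 0) := by
    have := (integrableOn_Ioi_comp_mul_left_iff
      (fun x : ℝ ↦ Real.exp (-x) * x ^ (t + 1 - 1)) 0 hc).mpr (by simpa using h)
    simpa using this
  have h3 := h2.const_mul (c ^ t)⁻¹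
  apply IntegrableOn.congr_fun h3 ?_ measurableSet_Ioi
  intro x hx
  simp only [mem_Ioi] at hx
  simp only [add_sub_cancel_right]
  rw [Real.mul_rpow hc.le hx.le]
  have hct : (c:ℝ) ^ t ≠ 0 := (Real.rpow_pos_of_pos hc t).ne'
  field_simp

lemma contOn_rpow (t : ℝ) : ContinuousOn (fun w : ℝ ↦ ((w ^ t : ℝ) : ℂ)) (Ioi 0) :=
  Complex.continuous_ofReal.comp_continuousOn
    (fun w hw ↦ (Real.continuousAt_rpow_const w t (Or.inl (ne_of_gt hw))).continuousWithinAt)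

lemma intB {t : ℝ} (ht : -1 < t) {z : ℂ} (hz : 0 < z.re) :
    IntegrableOn (fun w : ℝ ↦ Complex.exp (-(z * w)) * ((w ^ t : ℝ) : ℂ)) (Ioi 0) := by
  apply Integrable.mono' (intA ht hz)
  · exact (((Complex.continuous_exp.comp (by continuity)).continuousOn).mul
      (contOn_rpow t)).aestronglyMeasurable measurableSet_Ioi
  · rw [ae_restrict_iff' measurableSet_Ioi]
    filter_upwards with w hw
    simp only [norm_mul, Complex.norm_exp, Complex.norm_real, Real.norm_eq_abs]
    rw [_root_.abs_of_nonneg (Real.rpow_nonneg (le_of_lt hw) t)]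
    have : (-(z * (w : ℂ))).re = -(z.re * w) := by
      simp [Complex.mul_re]
    rw [this, mul_comm]
    

lemma hasDerivC {t : ℝ} (ht : -1 < t) {z₀ : ℂ} (hz : 0 < z₀.re) :
    HasDerivAt (fun z : ℂ ↦ ∫ w in Ioi (0:ℝ), Complex.exp (-(z * w)) * ((w ^ t : ℝ) : ℂ))
      (∫ w in Ioi (0:ℝ), Complex.exp (-(z₀ * w)) * -(w:ℂ) * ((w ^ t : ℝ) : ℂ)) z₀ := by
  set F : ℂ → ℝ → ℂ := fun z w ↦ Complex.exp (-(z * w)) * ((w ^ t : ℝ) : ℂ) with hF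
  set F' : ℂ → ℝ → ℂ := fun z w ↦ Complex.exp (-(z * w)) * -(w:ℂ) * ((w ^ t : ℝ) : ℂ) with hF'
  have hmeas : ∀ z : ℂ, AEStronglyMeasurable (F z) (volume.restrict (Ioi (0:ℝ))) := fun z ↦
    (((Complex.continuous_exp.comp (by continuity)).continuousOn).mul
      (contOn_rpow t)).aestronglyMeasurable measurableSet_Ioi
  have hmeas' : AEStronglyMeasurable (F' z₀) (volume.restrict (Ioi (0:ℝ))) := by
    apply ContinuousOn.aestronglyMeasurable ?_ measurableSet_Ioi
    exact (((Complex.continuous_exp.comp (by continuity)).mul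
      (by continuity)).continuousOn).mul (contOn_rpow t)
  have key := hasDerivAt_integral_of_dominated_loc_of_deriv_le (μ := volume.restrict (Ioi (0:ℝ)))
    (F := F) (F' := F') (x₀ := z₀) (Metric.ball_mem_nhds z₀ (half_pos hz))
    (Filter.Eventually.of_forall hmeas) (intB ht hz) hmeas'
    (bound := fun w ↦ w ^ (t+1) * Real.exp (-(z₀.re/2 * w))) ?_ (intA (by linarith) (by linarith))
    ?_
  · exact key.2
  · rw [ae_restrict_iff' measurableSet_Ioi]
    filter_upwards with w hw
    intro z hz'
    have hzre : z₀.re / 2 ≤ z.re := by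
      have h1 : |(z - z₀).re| ≤ ‖z - z₀‖ := Complex.abs_re_le_norm _
      rw [Metric.mem_ball, Complex.dist_eq] at hz'
      have := abs_le.mp (le_of_lt (lt_of_le_of_lt h1 hz'))
      simp only [Complex.sub_re] at this
      linarith [this.1]
    simp only [hF', norm_mul, Complex.norm_exp, Complex.norm_real, Real.norm_eq_abs,
      norm_neg]
    have h2 : (-(z * (w : ℂ))).re = -(z.re * w) := by simp [Complex.mul_re]
    rw [h2, _root_.abs_of_nonneg (Real.rpow_nonneg (le_of_lt hw) t),
      _root_.abs_of_nonneg (le_of_lt hw)]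
    have h3 : Real.exp (-(z.re * w)) ≤ Real.exp (-(z₀.re/2 * w)) := by
      apply Real.exp_le_exp.mpr
      nlinarith [(mem_Ioi.mp hw).le]
    calc Real.exp (-(z.re * w)) * w * w ^ t
        ≤ Real.exp (-(z₀.re/2 * w)) * w * w ^ t := by
          have : (0:ℝ) ≤ w * w ^ t := mul_nonneg (le_of_lt hw) (Real.rpow_nonneg (le_of_lt hw) t)
          nlinarith [Real.rpow_nonneg (mem_Ioi.mp hw).le t, (mem_Ioi.mp hw).le]
      _ = w ^ (t+1) * Real.exp (-(z₀.re/2 * w)) := by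
          rw [Real.rpow_add hw, Real.rpow_one]; ring
  · rw [ae_restrict_iff' measurableSet_Ioi]
    filter_upwards with w hw
    intro z hz'
    have h1 : HasDerivAt (fun z : ℂ ↦ -(z * (w:ℂ))) (-(w:ℂ)) z := by
      exact (hasDerivAt_mul_const (w:ℂ)).neg
    exact (h1.cexp).mul_const _

lemma gammaC {s : ℝ} (hs0 : 0 < s) (hs1 : s < 1) {z : ℂ} (hz : 0 < z.re) :
    ∫ w in Ioi (0:ℝ), Complex.exp (-(z * w)) * ((w ^ (-s) : ℝ) : ℂ)
      = (Real.Gamma (1 - s) : ℂ) * z ^ ((s : ℂ) - 1) := by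
  set U : Set ℂ := {z : ℂ | 0 < z.re} with hU
  set f : ℂ → ℂ := fun z ↦ ∫ w in Ioi (0:ℝ), Complex.exp (-(z * w)) * ((w ^ (-s) : ℝ) : ℂ)
  set g : ℂ → ℂ := fun z ↦ (Real.Gamma (1 - s) : ℂ) * z ^ ((s : ℂ) - 1)
  have hUo : IsOpen U := isOpen_lt continuous_const Complex.continuous_re
  have hUc : IsPreconnected U := (convex_halfSpace_re_gt 0).isPreconnected
  have hs' : (-1 : ℝ) < -s := by linarith
  have hf : AnalyticOnNhd ℂ f U := DifferentiableOn.analyticOnNhd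
    (fun z hz ↦ ((hasDerivC hs' hz).differentiableAt).differentiableWithinAt) hUo
  have hg : AnalyticOnNhd ℂ g U := DifferentiableOn.analyticOnNhd
    (fun z hz ↦ ((((hasDerivAt_id z).cpow_const
      (Or.inl hz)).differentiableAt.const_mul _)).differentiableWithinAt) hUo
  have hreal : ∀ x : ℝ, 0 < x → f x = g x := by
    intro x hx
    have key := integral_cpow_mul_exp_neg_mul_Ioi
      (a := 1 - (s:ℂ)) (r := x) (by simp [hs1]) hx
    have h1 : f x = ∫ t in Ioi (0:ℝ), (t:ℂ) ^ (1 - (s:ℂ) - 1) * Complex.exp (-(x * t)) := by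
      apply setIntegral_congr_fun measurableSet_Ioi
      intro t ht
      simp only []
      rw [Complex.ofReal_cpow (le_of_lt ht), mul_comm]
      norm_num
    rw [h1, key]
    have hxne : (x:ℂ) ≠ 0 := by exact_mod_cast hx.ne'
    have harg : Complex.arg x ≠ Real.pi := by
      rw [Complex.arg_ofReal_of_nonneg hx.le]
      exact (Real.pi_ne_zero).symm
    have h2 : (1 / (x:ℂ)) ^ (1 - (s:ℂ)) = (x:ℂ) ^ ((s:ℂ) - 1) := by
      rw [one_div, Complex.inv_cpow _ _ harg, ← Complex.cpow_neg]
      ring_nf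
    have h3 : Complex.Gamma (1 - (s:ℂ)) = ((Real.Gamma (1 - s) : ℝ) : ℂ) := by
      rw [show (1 - (s:ℂ)) = ((1 - s : ℝ) : ℂ) by push_cast; ring, Complex.Gamma_ofReal]
    rw [h2, h3, mul_comm]
  have h1U : (1:ℂ) ∈ U := by simp [hU]
  have hfreq : ∃ᶠ z in nhdsWithin (1:ℂ) {(1:ℂ)}ᶜ, f z = g z := by
    have htend : Filter.Tendsto (fun n : ℕ ↦ ((1 + 1/(n+1) : ℝ) : ℂ)) Filter.atTop
        (nhdsWithin (1:ℂ) {(1:ℂ)}ᶜ) := by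
      apply tendsto_nhdsWithin_of_tendsto_nhds_of_eventually_within
      · have : Filter.Tendsto (fun n : ℕ ↦ (1 + 1/(n+1) : ℝ)) Filter.atTop (nhds 1) := by
          simpa using (tendsto_one_div_add_atTop_nhds_zero_nat (𝕜 := ℝ)).const_add 1
        have h2 := (Complex.continuous_ofReal.tendsto 1).comp this
        simp only [Function.comp_def] at h2
        simpa using h2
      · filter_upwards with n
        simp only [Set.mem_compl_iff, Set.mem_singleton_iff]
        intro h
        have : (1 + 1/((n:ℝ)+1)) = 1 := by exact_mod_cast h
        have hn : 0 < 1/((n:ℝ)+1) := by positivity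
        linarith
    apply htend.frequently
    apply Filter.Frequently.of_forall
    intro n
    exact hreal _ (by positivity)
  have := hf.eqOn_of_preconnected_of_frequently_eq hg hUc h1U hfreq
  exact this hz

lemma keyD {s : ℝ} (hs0 : 0 < s) (hs1 : s < 1) {z : ℂ} (hz : 0 < z.re) :
    ∫ w in Ioi (0:ℝ), (1 - Complex.exp (-(z * w))) * ((w ^ (-1 - s) : ℝ) : ℂ)
      = (Real.Gamma (1 - s) : ℂ) / s * z ^ (s : ℂ) := by
  have hexp : (-1 - s : ℝ) = -s - 1 := by ring
  rw [hexp]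
  have hzne : z ≠ 0 := by
    intro h; rw [h] at hz; simp at hz
  have habs : (0:ℝ) < ‖z‖ + 1 := by positivity
  set δ : ℝ := min 1 (1 / (‖z‖ + 1)) with hδ
  have hδ0 : 0 < δ := lt_min one_pos (by positivity)
  set F : ℝ → ℂ := fun w ↦ (1 - Complex.exp (-(z * w))) * ((w ^ (-s) : ℝ) : ℂ) with hF
  set f' : ℝ → ℂ := fun w ↦ z * (Complex.exp (-(z * w)) * ((w ^ (-s) : ℝ) : ℂ))
    + (-(s:ℂ)) * ((1 - Complex.exp (-(z * w))) * ((w ^ (-s - 1) : ℝ) : ℂ)) with hf'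
  -- bound on |1 - exp(-(z w))| for small w
  have hbsmall : ∀ w : ℝ, 0 < w → w ≤ δ →
      ‖(1 - Complex.exp (-(z * w)))‖ ≤ 2 * (‖z‖ * w) := by
    intro w hw hwδ
    have h1 : ‖(-(z * w) : ℂ)‖ ≤ 1 := by
      rw [norm_neg, norm_mul, Complex.norm_real, Real.norm_eq_abs, _root_.abs_of_nonneg hw.le]
      have : w ≤ 1 / (‖z‖ + 1) := le_trans hwδ (min_le_right _ _)
      rw [le_div_iff₀ habs] at this
      nlinarith [norm_nonneg z]
    have := Complex.norm_exp_sub_one_le h1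
    rw [norm_neg, norm_mul, Complex.norm_real, Real.norm_eq_abs, _root_.abs_of_nonneg hw.le] at this
    calc ‖(1 - Complex.exp (-(z * w)))‖
        = ‖Complex.exp (-(z * w)) - 1‖ := by rw [norm_sub_rev]
      _ ≤ 2 * (‖z‖ * w) := by
          have h2 := Complex.norm_exp_sub_one_le h1
          rwa [norm_neg, norm_mul, Complex.norm_real, Real.norm_eq_abs,
            _root_.abs_of_nonneg hw.le] at h2
  -- bound for all w ≥ 0
  have hblarge : ∀ w : ℝ, 0 ≤ w → ‖(1 - Complex.exp (-(z * w)))‖ ≤ 2 := by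
    intro w hw
    have h1 : ‖Complex.exp (-(z * w))‖ ≤ 1 := by
      rw [Complex.norm_exp]
      apply Real.exp_le_one_iff.mpr
      have : (-(z * (w:ℂ))).re = -(z.re * w) := by simp [Complex.mul_re]
      rw [this]
      nlinarith
    calc ‖(1 - Complex.exp (-(z * w)))‖
        ≤ ‖(1:ℂ)‖ + ‖Complex.exp (-(z * w))‖ := by
          simpa [sub_eq_add_neg] using norm_add_le (1:ℂ) (-(Complex.exp (-(z * w))))
      _ ≤ 2 := by rw [norm_one]; linarith

  have hF0 : F 0 = 0 := by
    simp [hF]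
  -- continuity at 0 from the right
  have hcont : ContinuousWithinAt F (Ici (0:ℝ)) 0 := by
    rw [← Set.Ioi_insert, continuousWithinAt_insert_self]
    unfold ContinuousWithinAt
    rw [hF0]
    apply squeeze_zero_norm' (a := fun w : ℝ ↦ (2 * ‖z‖) * w ^ (1-s))
    · filter_upwards [Ioo_mem_nhdsGT_of_mem (show (0:ℝ) ∈ Ico 0 δ from ⟨le_refl 0, hδ0⟩)]
        with w hw
      obtain ⟨hw1, hw2⟩ := hw
      simp only [hF, norm_mul, Complex.norm_real, Real.norm_eq_abs,
        _root_.abs_of_nonneg (Real.rpow_nonneg hw1.le (-s))]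
      calc ‖(1 - Complex.exp (-(z * w)))‖ * w ^ (-s)
          ≤ (2 * (‖z‖ * w)) * w ^ (-s) := by
            apply mul_le_mul_of_nonneg_right (hbsmall w hw1 hw2.le)
              (Real.rpow_nonneg hw1.le (-s))
        _ = (2 * ‖z‖) * w ^ (1-s) := by
            rw [show (1-s:ℝ) = 1 + -s by ring, Real.rpow_add hw1, Real.rpow_one]; ring
    · have h3 := ((Real.continuousAt_rpow_const 0 (1-s)
        (Or.inr (by linarith))).tendsto.const_mul (2*‖z‖)).mono_left
          (nhdsWithin_le_nhds (s := Set.Ioi (0:ℝ)))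
      simpa [Real.zero_rpow (show (1:ℝ)-s ≠ 0 by linarith)] using h3
  -- derivative on Ioi 0
  have hderiv : ∀ x ∈ Ioi (0:ℝ), HasDerivAt F (f' x) x := by
    intro x hx
    rw [mem_Ioi] at hx
    have h1 : HasDerivAt (fun w : ℝ ↦ -(z * (w:ℂ))) (-z) x := by
      have h0 : HasDerivAt (fun w : ℝ ↦ ((w:ℝ):ℂ)) 1 x := by
        simpa using (hasDerivAt_id x).ofReal_comp
      have := (h0.const_mul z).neg; simp only [mul_one] at this; exact this
    have h2 := h1.cexp
    have h3 : HasDerivAt (fun w : ℝ ↦ (1:ℂ) - Complex.exp (-(z*w)))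
        (z * Complex.exp (-(z*x))) x := by
      have h3' := (hasDerivAt_const x (1:ℂ)).sub h2
      refine h3'.congr_deriv ?_
      ring
    have h4 : HasDerivAt (fun w : ℝ ↦ ((w ^ (-s) : ℝ) : ℂ)) (((-s * x^(-s-1) : ℝ)):ℂ) x :=
      (Real.hasDerivAt_rpow_const (Or.inl hx.ne')).ofReal_comp
    have h5 := h3.mul h4
    refine h5.congr_deriv ?_
    simp only [hf']
    push_cast
    ring
  -- integrability of the pieces
  have hint1 : IntegrableOn (fun w : ℝ ↦ z * (Complex.exp (-(z*w)) * ((w^(-s):ℝ):ℂ)))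
      (Ioi (0:ℝ)) := (intB (by linarith) hz).const_mul z
  have hcontB : ContinuousOn (fun w : ℝ ↦ (1 - Complex.exp (-(z*w))) * ((w^(-s-1):ℝ):ℂ))
      (Ioi (0:ℝ)) :=
    ((continuous_const.sub (Complex.continuous_exp.comp (by continuity))).continuousOn).mul
      (contOn_rpow _)
  have hB : IntegrableOn (fun w : ℝ ↦ (1 - Complex.exp (-(z*w))) * ((w^(-s-1):ℝ):ℂ))
      (Ioi (0:ℝ)) := by
    have hsub : Ioc (0:ℝ) δ ∪ Ioi δ = Ioi 0 := Set.Ioc_union_Ioi_eq_Ioi hδ0.le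
    rw [← hsub]
    apply IntegrableOn.union
    · apply Integrable.mono' (g := fun w : ℝ ↦ (2*‖z‖) * w^(-s))
      · apply Integrable.const_mul
        exact (intervalIntegrable_iff_integrableOn_Ioc_of_le hδ0.le).mp
          (intervalIntegral.intervalIntegrable_rpow' (by linarith))
      · exact (hcontB.mono Set.Ioc_subset_Ioi_self).aestronglyMeasurable measurableSet_Ioc
      · rw [ae_restrict_iff' measurableSet_Ioc]
        filter_upwards with w hw
        obtain ⟨hw1, hw2⟩ := hw
        simp only [norm_mul, Complex.norm_real, Real.norm_eq_abs,
          _root_.abs_of_nonneg (Real.rpow_nonneg hw1.le (-s-1))]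
        calc ‖(1 - Complex.exp (-(z * w)))‖ * w ^ (-s-1)
            ≤ (2 * (‖z‖ * w)) * w ^ (-s-1) := by
              apply mul_le_mul_of_nonneg_right (hbsmall w hw1 hw2)
                (Real.rpow_nonneg hw1.le (-s-1))
          _ = (2 * ‖z‖) * w ^ (-s) := by
              rw [show (-s:ℝ) = 1 + (-s-1) by ring, Real.rpow_add hw1, Real.rpow_one]; ring
    · apply Integrable.mono' (g := fun w : ℝ ↦ 2 * w^(-s-1))
      · exact (integrableOn_Ioi_rpow_of_lt (by linarith) hδ0).const_mul 2
      · exact (hcontB.mono (Set.Ioi_subset_Ioi hδ0.le)).aestronglyMeasurable measurableSet_Ioi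
      · rw [ae_restrict_iff' measurableSet_Ioi]
        filter_upwards with w hw
        rw [mem_Ioi] at hw
        have hw0 : 0 < w := lt_trans hδ0 hw
        simp only [norm_mul, Complex.norm_real, Real.norm_eq_abs,
          _root_.abs_of_nonneg (Real.rpow_nonneg hw0.le (-s-1))]
        exact mul_le_mul_of_nonneg_right (hblarge w hw0.le)
          (Real.rpow_nonneg hw0.le (-s-1))
  have hint2 : IntegrableOn (fun w : ℝ ↦
      (-(s:ℂ)) * ((1 - Complex.exp (-(z*w))) * ((w^(-s-1):ℝ):ℂ))) (Ioi (0:ℝ)) :=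
    hB.const_mul _
  have hintf' : IntegrableOn f' (Ioi (0:ℝ)) := hint1.add hint2
  -- limit at infinity
  have htop : Filter.Tendsto F Filter.atTop (nhds 0) := by
    apply squeeze_zero_norm' (a := fun w : ℝ ↦ 2 * w ^ (-s))
    · filter_upwards [Filter.eventually_gt_atTop (0:ℝ)] with w hw
      simp only [hF, norm_mul, Complex.norm_real, Real.norm_eq_abs,
        _root_.abs_of_nonneg (Real.rpow_nonneg hw.le (-s))]
      exact mul_le_mul_of_nonneg_right (hblarge w hw.le) (Real.rpow_nonneg hw.le (-s))
    · simpa using (tendsto_rpow_neg_atTop hs0).const_mul (2:ℝ)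
  have main := integral_Ioi_of_hasDerivAt_of_tendsto hcont hderiv hintf' htop
  rw [hF0, sub_zero] at main
  have hsplit : ∫ w in Ioi (0:ℝ), f' w
      = z * (∫ w in Ioi (0:ℝ), Complex.exp (-(z*w)) * ((w^(-s):ℝ):ℂ))
        + (-(s:ℂ)) * ∫ w in Ioi (0:ℝ), (1 - Complex.exp (-(z*w))) * ((w^(-s-1):ℝ):ℂ) := by
    simp only [hf']
    rw [integral_add hint1 hint2, integral_const_mul, integral_const_mul]
  rw [hsplit, gammaC hs0 hs1 hz] at main
  have hs0' : (s:ℂ) ≠ 0 := by exact_mod_cast hs0.ne'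
  have hpow : z * z ^ ((s:ℂ)-1) = z ^ (s:ℂ) := by
    nth_rewrite 1 [← Complex.cpow_one z]
    rw [← Complex.cpow_add _ _ hzne]
    norm_num
  have hsolve : (s:ℂ) * ∫ w in Ioi (0:ℝ), (1 - Complex.exp (-(z*w))) * ((w^(-s-1):ℝ):ℂ)
      = (Real.Gamma (1-s) : ℂ) * z ^ (s:ℂ) := by
    linear_combination -main + (Real.Gamma (1-s) : ℂ) * hpow
  rw [div_mul_eq_mul_div, eq_div_iff hs0']
  linear_combination hsolve

lemma argArctan {z : ℂ} (hz : 0 < z.re) : Complex.arg z = Real.arctan (z.im / z.re) := by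
  have h := abs_lt.mp (Complex.abs_arg_lt_pi_div_two_iff.mpr (Or.inl hz))
  rw [← Complex.tan_arg, Real.arctan_tan h.1 h.2]

lemma cpow_re {z : ℂ} (hz : z ≠ 0) (s : ℝ) :
    (z ^ (s:ℂ)).re = ‖z‖ ^ s * Real.cos (s * Complex.arg z) := by
  rw [Complex.cpow_def_of_ne_zero hz, Complex.exp_re]
  have h1 : (Complex.log z * (s:ℂ)).re = Real.log (‖z‖) * s := by
    simp [Complex.mul_re, Complex.log_re]
  have h2 : (Complex.log z * (s:ℂ)).im = Complex.arg z * s := by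
    simp [Complex.mul_im, Complex.log_im]
  rw [h1, h2, ← Real.rpow_def_of_pos (norm_pos_iff.mpr hz), mul_comm (Complex.arg z) s]

/-- Short-time integral for tempered stable processes with `α ∈ (1,2)`, `α' = 1/α`:
`(1/π) Re ∫_0^∞ (1 - e^{(p+iq)v^α}) v^{-2} dv = (Γ(1-α')/π) r^{α'} cos(α'χ)`,
with `r = √(p²+q²)`, `χ = arctan(-q/p)`, and this quantity is positive. -/
theorem tempered_stable_short_time_integral (α p q : ℝ)
    (hα : α ∈ Set.Ioo (1 : ℝ) 2) (hp : p < 0) :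
    (1 / Real.pi) *
        (∫ v in Set.Ioi (0 : ℝ),
          (1 - Complex.exp (((p : ℂ) + (q : ℂ) * Complex.I) * ((v ^ α : ℝ) : ℂ))) *
            (((v ^ (-2 : ℝ) : ℝ)) : ℂ)).re =
      Real.Gamma (1 - 1 / α) / Real.pi * Real.sqrt (p ^ 2 + q ^ 2) ^ (1 / α) *
        Real.cos (1 / α * Real.arctan (-q / p)) ∧
    0 < Real.Gamma (1 - 1 / α) / Real.pi * Real.sqrt (p ^ 2 + q ^ 2) ^ (1 / α) *
        Real.cos (1 / α * Real.arctan (-q / p)) := by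
  obtain ⟨hα1, hα2⟩ := hα
  have hα0 : (0:ℝ) < α := by linarith
  set s : ℝ := 1 / α with hs
  have hs0 : 0 < s := by positivity
  have hs1 : s < 1 := by
    rw [hs, div_lt_one hα0]; linarith
  set z : ℂ := -((p : ℂ) + (q : ℂ) * Complex.I) with hz
  have hzre : z.re = -p := by simp [hz]
  have hzim : z.im = -q := by simp [hz]
  have hzre0 : 0 < z.re := by rw [hzre]; linarith
  have hzne : z ≠ 0 := by
    intro h
    rw [h] at hzre0
    simp at hzre0
  -- substitution w = v ^ α
  have hsub : (∫ v in Set.Ioi (0 : ℝ),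
      (1 - Complex.exp (((p : ℂ) + (q : ℂ) * Complex.I) * ((v ^ α : ℝ) : ℂ))) *
        (((v ^ (-2 : ℝ) : ℝ)) : ℂ))
      = (α:ℂ)⁻¹ * ∫ w in Set.Ioi (0:ℝ),
          (1 - Complex.exp (-(z * w))) * ((w ^ (-1 - s) : ℝ) : ℂ) := by
    rw [← integral_const_mul, ← integral_comp_rpow_Ioi_of_pos
      (g := fun w : ℝ ↦ (α:ℂ)⁻¹ * ((1 - Complex.exp (-(z * w))) * ((w ^ (-1 - s) : ℝ) : ℂ)))
      hα0]
    apply setIntegral_congr_fun measurableSet_Ioi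
    intro v hv
    rw [mem_Ioi] at hv
    have hvα : (0:ℝ) < v ^ α := Real.rpow_pos_of_pos hv α
    simp only [real_smul]
    have hαne : (α:ℂ) ≠ 0 := by exact_mod_cast hα0.ne'
    have hexp : Complex.exp (((p : ℂ) + (q : ℂ) * Complex.I) * ((v ^ α : ℝ) : ℂ))
        = Complex.exp (-(z * ((v ^ α : ℝ) : ℂ))) := by
      congr 1
      rw [hz]
      ring
    have hrpow : ((v ^ α) ^ (-1 - s) : ℝ) = v ^ (α * (-1 - s)) := by
      rw [← Real.rpow_mul hv.le]
    have hexpo : α * (-1 - s) = -α - 1 := by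
      rw [hs]
      field_simp
    have hrpow2 : (v ^ (α - 1) : ℝ) * (v ^ (-α - 1) : ℝ) = v ^ (-2 : ℝ) := by
      rw [← Real.rpow_add hv]
      congr 1
      ring
    rw [hexp, hrpow, hexpo]
    push_cast
    rw [← hrpow2]
    push_cast
    field_simp
  rw [hsub, keyD hs0 hs1 hzre0]
  -- clean up the constant
  have hαne : (α:ℂ) ≠ 0 := by exact_mod_cast hα0.ne'
  have hsC : ((s:ℝ):ℂ) = 1 / (α:ℂ) := by
    rw [hs]; push_cast; ring
  have hconst : (α:ℂ)⁻¹ * ((Real.Gamma (1 - s) : ℂ) / (s:ℂ) * z ^ ((s:ℝ):ℂ))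
      = (Real.Gamma (1 - s) : ℂ) * z ^ ((s:ℝ):ℂ) := by
    rw [hsC]
    field_simp
  rw [hconst]
  -- real part
  have hre : ((Real.Gamma (1 - s) : ℂ) * z ^ ((s:ℝ):ℂ)).re
      = Real.Gamma (1 - s) * (‖z‖ ^ s * Real.cos (s * Complex.arg z)) := by
    rw [Complex.re_ofReal_mul, cpow_re hzne]
  -- compute abs and arg
  have habs : ‖z‖ = Real.sqrt (p ^ 2 + q ^ 2) := by
    rw [hz, norm_neg, Complex.norm_def, Complex.normSq_apply]
    simp only [Complex.add_re, Complex.ofReal_re, Complex.mul_re, Complex.I_re,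
      Complex.ofReal_im, Complex.I_im, Complex.add_im, Complex.mul_im]
    ring_nf
  have harg : Complex.arg z = Real.arctan (q / p) := by
    rw [argArctan hzre0, hzim, hzre, neg_div_neg_eq]
  have hcos : Real.cos (s * Complex.arg z) = Real.cos (s * Real.arctan (-q / p)) := by
    rw [harg, show (q / p : ℝ) = -(-q / p) by ring, Real.arctan_neg, mul_neg, Real.cos_neg]
  constructor
  · rw [hre, habs, hcos]
    field_simp
  · -- positivity
    have hΓ : 0 < Real.Gamma (1 - s) := Real.Gamma_pos_of_pos (by linarith)
    have hpq : 0 < p ^ 2 + q ^ 2 := by nlinarith [sq_nonneg q]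
    have hsqrt : 0 < Real.sqrt (p ^ 2 + q ^ 2) := Real.sqrt_pos.mpr hpq
    have hrpow : 0 < Real.sqrt (p ^ 2 + q ^ 2) ^ (1/α : ℝ) := Real.rpow_pos_of_pos hsqrt _
    have hχ : |Real.arctan (-q / p)| < Real.pi / 2 := by
      rw [abs_lt]
      exact ⟨Real.neg_pi_div_two_lt_arctan _, Real.arctan_lt_pi_div_two _⟩
    have hbound : |s * Real.arctan (-q / p)| < Real.pi / 2 := by
      rw [abs_mul, _root_.abs_of_pos hs0]
      calc s * |Real.arctan (-q / p)| ≤ 1 * |Real.arctan (-q / p)| := by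
            apply mul_le_mul_of_nonneg_right (le_of_lt hs1) (abs_nonneg _)
        _ < Real.pi / 2 := by rw [one_mul]; exact hχ
    have hcos2 : 0 < Real.cos (s * Real.arctan (-q / p)) := by
      apply Real.cos_pos_of_mem_Ioo
      constructor
      · linarith [abs_lt.mp hbound |>.1]
      · linarith [abs_lt.mp hbound |>.2]
    have := Real.pi_pos
    positivity
end
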